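/- Let G be a connected graph with adjacency matrix A whose spectral gap satisfies GAP(G) > √2·(√2 + 1), and let v be its unit principal eigenvector. Then for every graph G' differing from G in exactly one edge, with unit principal eigenvector v' (sign-aligned with v), it holds ‖v − v'‖₂ ≤ 2·√(v_{π(1)}² + v_{π(2)}²)/GAP(G), where v_{π(1)}, v_{π(2)} are the two largest entries of v. -/
import Mathlib

set_option maxHeartbeats 1000000

/-- Euclidean norm of a vector in ℝⁿ. -/
noncomputable def vecNorm {n : ℕ} (x : Fin n → ℝ) : ℝ :=
  Real.sqrt (∑ i, x i ^ 2)

/-- Largest eigenvalue magnitude of an eigenvalue list. -/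
noncomputable def lam1 {n : ℕ} (μ : Fin n → ℝ) : ℝ :=
  sSup {y | ∃ i, y = |μ i|}

/-- Second-largest eigenvalue magnitude (with multiplicity) of an eigenvalue list. -/
noncomputable def lam2 {n : ℕ} (μ : Fin n → ℝ) : ℝ :=
  sSup {y | ∃ i j, i ≠ j ∧ y = min |μ i| |μ j|}

/-- The principal eigen-gap: |λ₁| − |λ₂|. -/
noncomputable def eigGap {n : ℕ} (μ : Fin n → ℝ) : ℝ := lam1 μ - lam2 μ

local notation "⟪" x ", " y "⟫" => @inner ℝ _ _ x y

namespace LSB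

open Matrix Finset

variable {N : ℕ}


lemma lam1_set_eq {n : ℕ} (μ : Fin n → ℝ) :
    {y | ∃ i, y = |μ i|} = Set.range (fun i => |μ i|) := by
  ext y; simp [eq_comm]

lemma le_lam1 {n : ℕ} (μ : Fin n → ℝ) (i : Fin n) : |μ i| ≤ lam1 μ := by
  apply le_csSup
  · rw [lam1_set_eq]; exact (Set.finite_range _).bddAbove
  · exact ⟨i, rfl⟩

lemma le_lam2 {n : ℕ} (μ : Fin n → ℝ) {i j : Fin n} (h : i ≠ j) :
    min |μ i| |μ j| ≤ lam2 μ := by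
  apply le_csSup
  · refine BddAbove.mono ?_
      ((Set.finite_range (fun p : Fin n × Fin n => min |μ p.1| |μ p.2|)).bddAbove)
    rintro y ⟨a, b, -, rfl⟩; exact ⟨(a, b), rfl⟩
  · exact ⟨i, j, h, rfl⟩

lemma lam1_attained {n : ℕ} (μ : Fin n → ℝ) (h : n ≠ 0) : ∃ i, lam1 μ = |μ i| := by
  have hne : {y | ∃ i, y = |μ i|}.Nonempty := ⟨|μ ⟨0, Nat.pos_of_ne_zero h⟩|, ⟨_, rfl⟩⟩
  have hfin : {y | ∃ i : Fin n, y = |μ i|}.Finite := by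
    rw [lam1_set_eq]; exact Set.finite_range _
  exact hne.csSup_mem hfin


section helpers
variable {N : ℕ}

lemma sum_two (F : Fin N → ℝ) {i j : Fin N} (hij : i ≠ j)
    (h : ∀ t, t ≠ i → t ≠ j → F t = 0) : ∑ t, F t = F i + F j := by
  rw [← Finset.sum_pair hij]
  symm
  apply Finset.sum_subset (Finset.subset_univ _)
  intro x _ hx
  simp only [Finset.mem_insert, Finset.mem_singleton, not_or] at hx
  exact h x hx.1 hx.2

lemma vecNorm_eq (y : Fin N → ℝ) :
    Real.sqrt (∑ t, y t ^ 2) = ‖(WithLp.equiv 2 (Fin N → ℝ)).symm y‖ := by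
  rw [EuclideanSpace.norm_eq]
  congr 1
  apply Finset.sum_congr rfl
  intro t _
  rw [Real.norm_eq_abs, sq_abs]
  rfl

end helpers


lemma abs_sq_le {x y : ℝ} (h : |x| ≤ |y|) : x ^ 2 ≤ y ^ 2 := by
  rw [← sq_abs x, ← sq_abs y]
  exact pow_le_pow_left₀ (abs_nonneg x) h 2

lemma pair_le_top {n : ℕ} (v : Fin (n + 2) → ℝ) (π : Equiv.Perm (Fin (n + 2)))
    (hπ : ∀ k m : Fin (n + 2), k ≤ m → |v (π m)| ≤ |v (π k)|)
    {i j : Fin (n + 2)} (hij : i ≠ j) :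
    v i ^ 2 + v j ^ 2 ≤ v (π 0) ^ 2 + v (π 1) ^ 2 := by
  have key : ∀ a b : Fin (n + 2), π.symm a < π.symm b →
      v a ^ 2 + v b ^ 2 ≤ v (π 0) ^ 2 + v (π 1) ^ 2 := by
    intro a b hab
    have ha : |v a| ≤ |v (π 0)| := by
      have := hπ 0 (π.symm a) (Fin.zero_le _)
      rwa [Equiv.apply_symm_apply] at this
    have hb1 : (1 : Fin (n + 2)) ≤ π.symm b := by
      rw [Fin.le_def]
      have := Fin.lt_def.mp hab
      have h1 : (1 : Fin (n + 2)).val = 1 := rfl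
      omega
    have hb : |v b| ≤ |v (π 1)| := by
      have := hπ 1 (π.symm b) hb1
      rwa [Equiv.apply_symm_apply] at this
    exact add_le_add (abs_sq_le ha) (abs_sq_le hb)
  have hne : π.symm i ≠ π.symm j := fun h => hij (π.symm.injective h)
  rcases lt_or_gt_of_ne hne with h | h
  · exact key i j h
  · have := key j i h
    linarith




lemma innerE (x y : EuclideanSpace ℝ (Fin N)) :
    ⟪x, y⟫ = ∑ t, x t * y t := by
  simp [PiLp.inner_apply, RCLike.inner_apply, mul_comm]

lemma dot_symm {A : Matrix (Fin N) (Fin N) ℝ} (hA : A.IsHermitian) (x y : Fin N → ℝ) :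
    ∑ t, (A.mulVec x) t * y t = ∑ t, x t * (A.mulVec y) t := by
  simp only [Matrix.mulVec, dotProduct, Finset.sum_mul, Finset.mul_sum]
  rw [Finset.sum_comm]
  apply Finset.sum_congr rfl; intro a _
  apply Finset.sum_congr rfl; intro b _
  have h : A a b = A b a := by
    conv_lhs => rw [← hA]
    simp [Matrix.conjTranspose_apply]
  rw [h]; ring

lemma eig_inner {A : Matrix (Fin N) (Fin N) ℝ} (hA : A.IsHermitian) (k : Fin N)
    (y : Fin N → ℝ) :
    ∑ t, (hA.eigenvectorBasis k) t * (A.mulVec y) t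
      = hA.eigenvalues k * ∑ t, (hA.eigenvectorBasis k) t * y t := by
  rw [← dot_symm hA]
  rw [show A.mulVec (hA.eigenvectorBasis k) = hA.eigenvalues k • ⇑(hA.eigenvectorBasis k) from
    hA.mulVec_eigenvectorBasis k]
  rw [Finset.mul_sum]
  apply Finset.sum_congr rfl; intro t _
  simp [Pi.smul_apply, smul_eq_mul]; ring

-- Parseval forms
example {A : Matrix (Fin N) (Fin N) ℝ} (hA : A.IsHermitian) (x y : EuclideanSpace ℝ (Fin N)) :
    ∑ k, ⟪x, hA.eigenvectorBasis k⟫ * ⟪hA.eigenvectorBasis k, y⟫ = ⟪x, y⟫ :=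
  hA.eigenvectorBasis.sum_inner_mul_inner x y



lemma edge_structure (G G' : SimpleGraph (Fin N))
    [DecidableRel G.Adj] [DecidableRel G'.Adj]
    (hdiff : (symmDiff G.edgeFinset G'.edgeFinset).card = 1) :
    ∃ (i j : Fin N) (ε : ℝ), i ≠ j ∧ ε ^ 2 = 1 ∧
      ∀ x : Fin N → ℝ, (G'.adjMatrix ℝ).mulVec x = (G.adjMatrix ℝ).mulVec x +
        (fun a => if a = i then ε * x j else if a = j then ε * x i else 0) := by
  obtain ⟨e, he⟩ := Finset.card_eq_one.mp hdiff
  induction e using Sym2.ind with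
  | _ i j =>
  -- membership fact
  have hmem : s(i, j) ∈ symmDiff G.edgeFinset G'.edgeFinset := by
    rw [he]; exact Finset.mem_singleton_self _
  rw [Finset.mem_symmDiff] at hmem
  have hij : i ≠ j := by
    rcases hmem with ⟨h1, -⟩ | ⟨h1, -⟩ <;>
    · rw [SimpleGraph.mem_edgeFinset, SimpleGraph.mem_edgeSet] at h1
      exact h1.ne
  refine ⟨i, j, if G'.Adj i j then 1 else -1, hij, by split <;> norm_num, ?_⟩
  set ε : ℝ := if G'.Adj i j then 1 else -1 with hε
  -- entry lemma
  have hxor : ∀ a b : Fin N, s(a,b) ∈ symmDiff G.edgeFinset G'.edgeFinset ↔ s(a,b) = s(i,j) := by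
    intro a b; rw [he, Finset.mem_singleton]
  have hentry : ∀ a b : Fin N,
      (G'.adjMatrix ℝ) a b - (G.adjMatrix ℝ) a b
        = if (a = i ∧ b = j) ∨ (a = j ∧ b = i) then ε else 0 := by
    intro a b
    have hs := hxor a b
    rw [Finset.mem_symmDiff] at hs
    simp only [SimpleGraph.mem_edgeFinset, SimpleGraph.mem_edgeSet] at hs
    by_cases h : (a = i ∧ b = j) ∨ (a = j ∧ b = i)
    · have hQ : s(a, b) = s(i, j) := Sym2.eq_iff.mpr h
      have hadj : G.Adj a b ↔ G.Adj i j := by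
        rcases h with ⟨rfl, rfl⟩ | ⟨rfl, rfl⟩
        · rfl
        · exact ⟨fun h => h.symm, fun h => h.symm⟩
      have hadj' : G'.Adj a b ↔ G'.Adj i j := by
        rcases h with ⟨rfl, rfl⟩ | ⟨rfl, rfl⟩
        · rfl
        · exact ⟨fun h => h.symm, fun h => h.symm⟩
      have hd := hs.mpr hQ
      rw [if_pos h, hε]
      by_cases hG' : G'.Adj i j
      · have hG : ¬ G.Adj a b := by
          rcases hd with ⟨h1, h2⟩ | ⟨h1, h2⟩
          · exact absurd (hadj'.mpr hG') h2
          · exact h2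
        simp [SimpleGraph.adjMatrix_apply, hG, hadj'.mpr hG', hG']
      · have hG : G.Adj a b := by
          rcases hd with ⟨h1, h2⟩ | ⟨h1, h2⟩
          · exact h1
          · exact absurd (hadj'.mp h1) hG'
        have : ¬ G'.Adj a b := fun hc => hG' (hadj'.mp hc)
        simp [SimpleGraph.adjMatrix_apply, hG, this, hG']
    · have hne : ¬ ((G.Adj a b ∧ ¬ G'.Adj a b) ∨ (G'.Adj a b ∧ ¬ G.Adj a b)) := by
        intro hc
        exact h (Sym2.eq_iff.mp (hs.mp hc))
      rw [if_neg h, SimpleGraph.adjMatrix_apply, SimpleGraph.adjMatrix_apply]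
      by_cases hG : G.Adj a b
      · have hG2 : G'.Adj a b := by tauto
        simp [hG, hG2]
      · have hG2 : ¬ G'.Adj a b := by tauto
        simp [hG, hG2]
  -- mulVec formula
  intro x
  funext a
  have key : ∀ b, (G'.adjMatrix ℝ) a b * x b
      = (G.adjMatrix ℝ) a b * x b
        + (if (a = i ∧ b = j) ∨ (a = j ∧ b = i) then ε else 0) * x b := by
    intro b
    have h0 := hentry a b
    linear_combination x b * h0
  simp only [Matrix.mulVec, dotProduct, Pi.add_apply]
  rw [Finset.sum_congr rfl (fun b _ => key b), Finset.sum_add_distrib]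
  congr 1
  by_cases hai : a = i
  · rw [if_pos hai]
    have hterm : ∀ b, (if (a = i ∧ b = j) ∨ (a = j ∧ b = i) then ε else 0) * x b
        = if b = j then ε * x b else 0 := by
      intro b
      by_cases hb : b = j
      · rw [if_pos (Or.inl ⟨hai, hb⟩), if_pos hb]
      · rw [if_neg ?_, if_neg hb, zero_mul]
        rintro (⟨-, h2⟩ | ⟨h1, -⟩)
        · exact hb h2
        · exact hij (hai.symm.trans h1)
    rw [Finset.sum_congr rfl (fun b _ => hterm b)]
    simp
  · rw [if_neg hai]
    by_cases haj : a = j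
    · rw [if_pos haj]
      have hterm : ∀ b, (if (a = i ∧ b = j) ∨ (a = j ∧ b = i) then ε else 0) * x b
          = if b = i then ε * x b else 0 := by
        intro b
        by_cases hb : b = i
        · rw [if_pos (Or.inr ⟨haj, hb⟩), if_pos hb]
        · rw [if_neg ?_, if_neg hb, zero_mul]
          rintro (⟨h1, -⟩ | ⟨-, h2⟩)
          · exact hai h1
          · exact hb h2
      rw [Finset.sum_congr rfl (fun b _ => hterm b)]
      simp
    · have hterm : ∀ b, (if (a = i ∧ b = j) ∨ (a = j ∧ b = i) then ε else 0) * x b = 0 := by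
        intro b
        rw [if_neg ?_, zero_mul]
        rintro (⟨h1, -⟩ | ⟨h1, -⟩)
        · exact hai h1
        · exact haj h1
      rw [Finset.sum_congr rfl (fun b _ => hterm b)]
      simp [haj]

def Efun (i j : Fin N) (ε : ℝ) (x : Fin N → ℝ) : Fin N → ℝ :=
  fun a => if a = i then ε * x j else if a = j then ε * x i else 0

noncomputable def toE (y : Fin N → ℝ) : EuclideanSpace ℝ (Fin N) :=
  (WithLp.equiv 2 (Fin N → ℝ)).symm y

lemma inner_toE (x : EuclideanSpace ℝ (Fin N)) (y : Fin N → ℝ) :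
    ⟪x, toE y⟫ = ∑ t, x t * y t := by
  rw [innerE]; rfl

lemma norm_toE (y : Fin N → ℝ) : ‖toE y‖ = Real.sqrt (∑ t, y t ^ 2) :=
  (vecNorm_eq y).symm

lemma toE_add (f g : Fin N → ℝ) : toE (f + g) = toE f + toE g := rfl

lemma parseval (b : OrthonormalBasis (Fin N) ℝ (EuclideanSpace ℝ (Fin N)))
    (x y : EuclideanSpace ℝ (Fin N)) :
    ∑ k, ⟪b k, x⟫ * ⟪b k, y⟫ = ⟪x, y⟫ := by
  rw [← b.sum_inner_mul_inner x y]
  exact Finset.sum_congr rfl fun k _ => by rw [real_inner_comm x (b k)]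

lemma eig_inner' {A : Matrix (Fin N) (Fin N) ℝ} (hA : A.IsHermitian) (k : Fin N)
    (y : Fin N → ℝ) :
    ⟪hA.eigenvectorBasis k, toE (A.mulVec y)⟫
      = hA.eigenvalues k * ⟪hA.eigenvectorBasis k, toE y⟫ := by
  rw [inner_toE, inner_toE]; exact eig_inner hA k y

lemma sq_sum_eq (b : OrthonormalBasis (Fin N) ℝ (EuclideanSpace ℝ (Fin N)))
    (x : EuclideanSpace ℝ (Fin N)) :
    ∑ k, ⟪b k, x⟫ ^ 2 = ⟪x, x⟫ := by
  rw [← parseval b x x]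
  exact Finset.sum_congr rfl fun k _ => sq (⟪b k, x⟫) ▸ by ring

lemma mulVec_sq_sum {A : Matrix (Fin N) (Fin N) ℝ} (hA : A.IsHermitian) (y : Fin N → ℝ) :
    ∑ t, (A.mulVec y) t ^ 2
      = ∑ k, (hA.eigenvalues k) ^ 2 * ⟪hA.eigenvectorBasis k, toE y⟫ ^ 2 := by
  have h1 : ∑ t, (A.mulVec y) t ^ 2 = ⟪toE (A.mulVec y), toE (A.mulVec y)⟫ := by
    rw [inner_toE]
    exact Finset.sum_congr rfl fun t _ => by rw [sq]; rfl
  rw [h1, ← parseval hA.eigenvectorBasis]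
  exact Finset.sum_congr rfl fun k _ => by rw [eig_inner' hA k y]; ring

lemma sq_le_of_abs_le {x y : ℝ} (h : |x| ≤ y) : x ^ 2 ≤ y ^ 2 := by
  rw [← sq_abs x]
  exact pow_le_pow_left₀ (abs_nonneg x) h 2

lemma sq_lt_of_lt_abs {x y : ℝ} (h0 : 0 ≤ x) (h : x < |y|) : x ^ 2 < y ^ 2 := by
  have := mul_self_lt_mul_self h0 h
  nlinarith [sq_abs y, abs_nonneg y]

lemma Efun_sq_sum {i j : Fin N} (hij : i ≠ j) {ε : ℝ} (hε2 : ε ^ 2 = 1) (x : Fin N → ℝ) :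
    ∑ t, (Efun i j ε x) t ^ 2 = x i ^ 2 + x j ^ 2 := by
  rw [sum_two (fun t => (Efun i j ε x) t ^ 2) hij]
  · have e1 : Efun i j ε x i = ε * x j := by simp [Efun]
    have e2 : Efun i j ε x j = ε * x i := by simp [Efun, hij.symm]
    rw [e1, e2]
    nlinarith [hε2]
  · intro t hti htj
    simp [Efun, hti, htj]

lemma pair_le_sum (x : Fin N → ℝ) {i j : Fin N} (hij : i ≠ j) :
    x i ^ 2 + x j ^ 2 ≤ ∑ t, x t ^ 2 := by
  have hs : ∑ t ∈ ({i, j} : Finset (Fin N)), x t ^ 2 = x i ^ 2 + x j ^ 2 :=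
    Finset.sum_pair hij
  rw [← hs]
  apply Finset.sum_le_sum_of_subset_of_nonneg (Finset.subset_univ _)
  intros; positivity

lemma at_most_one_big {A A' : Matrix (Fin N) (Fin N) ℝ} (hA : A.IsHermitian)
    (hA' : A'.IsHermitian) {i j : Fin N} {ε : ℝ} (hij : i ≠ j) (hε2 : ε ^ 2 = 1)
    (hE : ∀ x : Fin N → ℝ, A'.mulVec x = A.mulVec x + Efun i j ε x)
    {k1 k2 : Fin N} (hk : k1 ≠ k2)
    (h1 : lam2 hA.eigenvalues + 1 < |hA'.eigenvalues k1|)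
    (h2 : lam2 hA.eigenvalues + 1 < |hA'.eigenvalues k2|) : False := by
  set μ := hA.eigenvalues with hμ
  set ν := hA'.eigenvalues with hν
  set u := hA'.eigenvectorBasis with hu
  set w := hA.eigenvectorBasis with hw
  set l2 := lam2 μ with hl2
  have hN : N ≠ 0 := fun h => (h ▸ k1).elim0
  have hl2nn : 0 ≤ l2 := le_trans (le_min (abs_nonneg _) (abs_nonneg _)) (le_lam2 μ hk)
  obtain ⟨m, hm⟩ := lam1_attained μ hN
  have hsmall : ∀ k, k ≠ m → |μ k| ≤ l2 := by
    intro k hkm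
    have h3 := le_lam2 μ hkm
    have h4 : |μ k| ≤ |μ m| := hm ▸ le_lam1 μ k
    rwa [min_eq_left h4] at h3
  set p := ⟪w m, (u k1 : EuclideanSpace ℝ (Fin N))⟫ with hp
  set q := ⟪w m, (u k2 : EuclideanSpace ℝ (Fin N))⟫ with hq
  obtain ⟨α, β, hunit, horth⟩ : ∃ α β : ℝ, α ^ 2 + β ^ 2 = 1 ∧ α * p + β * q = 0 := by
    by_cases hpq : p = 0 ∧ q = 0
    · exact ⟨1, 0, by norm_num, by simp [hpq.1]⟩
    · have hpos : 0 < p ^ 2 + q ^ 2 := by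
        rcases not_and_or.mp hpq with h | h
        · have : p ^ 2 > 0 := by positivity
          nlinarith [sq_nonneg q]
        · have : q ^ 2 > 0 := by positivity
          nlinarith [sq_nonneg p]
      set r := Real.sqrt (p ^ 2 + q ^ 2) with hr
      have hrpos : 0 < r := Real.sqrt_pos.mpr hpos
      have hr2 : r ^ 2 = p ^ 2 + q ^ 2 := Real.sq_sqrt hpos.le
      refine ⟨q / r, -(p / r), ?_, ?_⟩
      · field_simp
        linarith [hr2]
      · field_simp
        ring
  set x : EuclideanSpace ℝ (Fin N) := α • (u k1 : EuclideanSpace ℝ (Fin N)) + β • u k2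
    with hx
  have horm := u.orthonormal
  rw [orthonormal_iff_ite] at horm
  have hcu : ∀ k, ⟪(u k : EuclideanSpace ℝ (Fin N)), x⟫
      = if k = k1 then α else if k = k2 then β else 0 := by
    intro k
    rw [hx, inner_add_right, real_inner_smul_right, real_inner_smul_right, horm, horm]
    by_cases e1 : k = k1
    · rw [if_pos e1, if_pos e1, if_neg (e1 ▸ hk), mul_one, mul_zero, add_zero]
    · rw [if_neg e1, if_neg e1, mul_zero, zero_add]
      by_cases e2 : k = k2
      · rw [if_pos e2, if_pos e2, mul_one]
      · rw [if_neg e2, if_neg e2, mul_zero]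
  set xf : Fin N → ℝ := fun t => x t with hxf
  have hxE : toE xf = x := rfl
  have hxx : ⟪x, x⟫ = 1 := by
    rw [← sq_sum_eq u x]
    rw [Finset.sum_congr rfl fun k _ => by rw [hcu k]]
    rw [sum_two _ hk]
    · rw [if_neg (Ne.symm hk), if_pos (rfl : k1 = k1), if_pos (rfl : k2 = k2), hunit]
    · intro t ht1 ht2; rw [if_neg ht1, if_neg ht2]; norm_num
  -- norm of A' x is big
  have hSA' : (l2 + 1) ^ 2 < ∑ t, (A'.mulVec xf) t ^ 2 := by
    rw [mulVec_sq_sum hA' xf, hxE]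
    rw [Finset.sum_congr rfl fun k _ => by rw [hcu k]]
    rw [sum_two _ hk]
    · rw [if_neg (Ne.symm hk), if_pos (rfl : k1 = k1), if_pos (rfl : k2 = k2)]
      have b1 : (l2 + 1) ^ 2 < ν k1 ^ 2 := sq_lt_of_lt_abs (by linarith) h1
      have b2 : (l2 + 1) ^ 2 < ν k2 ^ 2 := sq_lt_of_lt_abs (by linarith) h2
      rcases le_or_gt (1/2) (α ^ 2) with hc | hc
      · nlinarith [sq_nonneg β, sq_nonneg α]
      · have : (1/2 : ℝ) ≤ β ^ 2 := by nlinarith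
        nlinarith [sq_nonneg α, sq_nonneg β]
    · intro t ht1 ht2; rw [if_neg ht1, if_neg ht2]; norm_num
  -- norm of E x is small
  have hEx : ∑ t, (Efun i j ε xf) t ^ 2 ≤ 1 := by
    rw [Efun_sq_sum hij hε2 xf]
    calc xf i ^ 2 + xf j ^ 2 ≤ ∑ t, xf t ^ 2 := pair_le_sum xf hij
    _ = ⟪x, x⟫ := by rw [← hxE, inner_toE]; exact Finset.sum_congr rfl fun t _ => by rw [sq]; rfl
    _ = 1 := hxx
  -- norm of A x is ≤ l2
  have hcwm : ⟪(w m : EuclideanSpace ℝ (Fin N)), x⟫ = 0 := by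
    rw [hx, inner_add_right, real_inner_smul_right, real_inner_smul_right, ← hp, ← hq, horth]
  have hSA : ∑ t, (A.mulVec xf) t ^ 2 ≤ l2 ^ 2 := by
    rw [mulVec_sq_sum hA xf, hxE]
    have hsplit : ∑ k, μ k ^ 2 * ⟪(w k : EuclideanSpace ℝ (Fin N)), x⟫ ^ 2
        = ∑ k ∈ Finset.univ.erase m, μ k ^ 2 * ⟪(w k : EuclideanSpace ℝ (Fin N)), x⟫ ^ 2
          + μ m ^ 2 * ⟪(w m : EuclideanSpace ℝ (Fin N)), x⟫ ^ 2 :=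
      (Finset.sum_erase_add _ _ (Finset.mem_univ m)).symm
    rw [hsplit, hcwm]
    have hb : ∑ k ∈ Finset.univ.erase m, μ k ^ 2 * ⟪(w k : EuclideanSpace ℝ (Fin N)), x⟫ ^ 2
        ≤ ∑ k ∈ Finset.univ.erase m, l2 ^ 2 * ⟪(w k : EuclideanSpace ℝ (Fin N)), x⟫ ^ 2 := by
      apply Finset.sum_le_sum
      intro k hkm
      have := hsmall k (Finset.ne_of_mem_erase hkm)
      exact mul_le_mul_of_nonneg_right (sq_le_of_abs_le this) (sq_nonneg _)
    have hc : ∑ k ∈ Finset.univ.erase m, ⟪(w k : EuclideanSpace ℝ (Fin N)), x⟫ ^ 2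
        ≤ ∑ k, ⟪(w k : EuclideanSpace ℝ (Fin N)), x⟫ ^ 2 := by
      apply Finset.sum_le_sum_of_subset_of_nonneg (Finset.erase_subset _ _)
      intros; positivity
    rw [sq_sum_eq w x, hxx] at hc
    rw [← Finset.mul_sum] at hb
    nlinarith [hb, hc, sq_nonneg l2]
  -- contradiction via norms
  have hEq : toE (A.mulVec xf) = toE (A'.mulVec xf) - toE (Efun i j ε xf) := by
    rw [hE xf, toE_add]; abel
  have hn1 : l2 + 1 < ‖toE (A'.mulVec xf)‖ := by
    rw [norm_toE]
    rw [show l2 + 1 = Real.sqrt ((l2 + 1) ^ 2) from (Real.sqrt_sq (by linarith)).symm]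
    exact Real.sqrt_lt_sqrt (by positivity) hSA'
  have hn2 : ‖toE (Efun i j ε xf)‖ ≤ 1 := by
    rw [norm_toE]
    calc Real.sqrt (∑ t, (Efun i j ε xf) t ^ 2) ≤ Real.sqrt 1 := Real.sqrt_le_sqrt hEx
    _ = 1 := Real.sqrt_one
  have hn3 : ‖toE (A.mulVec xf)‖ ≤ l2 := by
    rw [norm_toE]
    calc Real.sqrt (∑ t, (A.mulVec xf) t ^ 2) ≤ Real.sqrt (l2 ^ 2) := Real.sqrt_le_sqrt hSA
    _ = l2 := Real.sqrt_sq hl2nn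
  have htri : ‖toE (A'.mulVec xf)‖ - ‖toE (Efun i j ε xf)‖ ≤ ‖toE (A.mulVec xf)‖ := by
    rw [hEq]; exact norm_sub_norm_le _ _
  linarith

lemma toE_smul (c : ℝ) (y : Fin N → ℝ) : toE (c • y) = c • toE y := rfl

lemma inner_toE₂ (x y : Fin N → ℝ) : ⟪toE x, toE y⟫ = ∑ t, x t * y t :=
  inner_toE (toE x) y

lemma inner_toE_self (y : Fin N → ℝ) : ⟪toE y, toE y⟫ = ∑ t, y t ^ 2 := by
  rw [inner_toE₂]
  exact Finset.sum_congr rfl fun t _ => (sq (y t)).symm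

lemma abs_eq_one_of_sq {ε : ℝ} (h : ε ^ 2 = 1) : |ε| = 1 := by
  have h2 : (|ε| - 1) * (|ε| + 1) = 0 := by nlinarith [sq_abs ε]
  rcases mul_eq_zero.mp h2 with h3 | h3
  · linarith
  · nlinarith [abs_nonneg ε]

lemma final_arith {S c δ w2 W : ℝ} (hS : S = 2 - 2 * c) (hc0 : 0 ≤ c) (hc1 : c ≤ 1)
    (hkey : (δ - 1) ^ 2 * (1 - c ^ 2) ≤ w2) (hW : w2 ≤ W) (hWnn : 0 ≤ W)
    (hgap : 2 + Real.sqrt 2 < δ) : S ≤ (2 * Real.sqrt W / δ) ^ 2 := by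
  have hs2 : Real.sqrt 2 * Real.sqrt 2 = 2 := Real.mul_self_sqrt (by norm_num)
  have hs2nn : (0:ℝ) ≤ Real.sqrt 2 := Real.sqrt_nonneg 2
  have hδpos : (0:ℝ) < δ := by nlinarith
  have hrhs : (2 * Real.sqrt W / δ) ^ 2 = 4 * W / δ ^ 2 := by
    rw [div_pow, mul_pow, Real.sq_sqrt hWnn]
    norm_num
  rw [hrhs, hS, le_div_iff₀ (pow_pos hδpos 2)]
  have e1 : δ ^ 2 ≤ 2 * (δ - 1) ^ 2 := by nlinarith
  have e2 : 2 - 2 * c ≤ 2 * (1 - c ^ 2) := by nlinarith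
  have e3 : 0 ≤ 1 - c ^ 2 := by nlinarith
  have f1 : (2 - 2 * c) * δ ^ 2 ≤ 2 * (1 - c ^ 2) * δ ^ 2 :=
    mul_le_mul_of_nonneg_right e2 (sq_nonneg δ)
  have f2 : 2 * (1 - c ^ 2) * δ ^ 2 ≤ 2 * (1 - c ^ 2) * (2 * (δ - 1) ^ 2) :=
    mul_le_mul_of_nonneg_left e1 (by linarith)
  have f3 : 2 * (1 - c ^ 2) * (2 * (δ - 1) ^ 2) = 4 * ((δ - 1) ^ 2 * (1 - c ^ 2)) := by ring
  nlinarith [hkey, hW, f1, f2, f3]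

end LSB

open Finset LSB

/-- Local sensitivity bound for the principal component: if G is connected with
GAP(G) > √2·(√2+1), then for any G' differing from G in exactly one edge, the
sign-aligned unit principal eigenvectors satisfy
‖v − v'‖₂ ≤ 2·√(v_{π(1)}² + v_{π(2)}²)/GAP(G). -/
theorem local_sensitivity_bound (n : ℕ) (G G' : SimpleGraph (Fin (n + 2)))
    [DecidableRel G.Adj] [DecidableRel G'.Adj]
    (hconn : G.Connected)
    (hA : (G.adjMatrix ℝ).IsHermitian) (hA' : (G'.adjMatrix ℝ).IsHermitian)
    (hgap : Real.sqrt 2 * (Real.sqrt 2 + 1) < eigGap hA.eigenvalues)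
    (hdiff : (symmDiff G.edgeFinset G'.edgeFinset).card = 1)
    (v v' : Fin (n + 2) → ℝ) (l l' : ℝ)
    (hv_unit : vecNorm v = 1) (hv'_unit : vecNorm v' = 1)
    (hv_eig : (G.adjMatrix ℝ).mulVec v = l • v)
    (hv'_eig : (G'.adjMatrix ℝ).mulVec v' = l' • v')
    (hl : |l| = lam1 hA.eigenvalues) (hl' : |l'| = lam1 hA'.eigenvalues)
    (halign : 0 ≤ ∑ i, v i * v' i)
    (π : Equiv.Perm (Fin (n + 2)))
    (hπ : ∀ k m : Fin (n + 2), k ≤ m → |v (π m)| ≤ |v (π k)|) :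
    vecNorm (v - v') ≤
      2 * Real.sqrt (v (π 0) ^ 2 + v (π 1) ^ 2) / eigGap hA.eigenvalues := by
  classical
  have inst : Fact (1 ≤ (2:ENNReal)) := ⟨by norm_num⟩
  set A := G.adjMatrix ℝ with hAdef
  set A' := G'.adjMatrix ℝ with hA'def
  set μ : Fin (n + 2) → ℝ := hA.eigenvalues with hμdef
  set ν : Fin (n + 2) → ℝ := hA'.eigenvalues with hνdef
  set u := hA'.eigenvectorBasis with hudef
  set L1 := lam1 μ with hL1def
  set L2 := lam2 μ with hL2def
  have h01 : (0 : Fin (n + 2)) ≠ 1 := by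
    intro h
    have := congrArg Fin.val h
    simp at this
  have hL2nn : 0 ≤ L2 :=
    le_trans (le_min (abs_nonneg (μ 0)) (abs_nonneg (μ 1))) (le_lam2 μ h01)
  have hs2 : Real.sqrt 2 * Real.sqrt 2 = 2 := Real.mul_self_sqrt (by norm_num)
  have hs2nn : (0:ℝ) ≤ Real.sqrt 2 := Real.sqrt_nonneg 2
  have hs2one : (1:ℝ) ≤ Real.sqrt 2 := by nlinarith
  have hgap' : 2 + Real.sqrt 2 < L1 - L2 := by
    have hh : Real.sqrt 2 * (Real.sqrt 2 + 1) = 2 + Real.sqrt 2 := by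
      rw [mul_add, hs2, mul_one]
    have : eigGap hA.eigenvalues = L1 - L2 := rfl
    rw [this] at hgap
    linarith
  set δ := L1 - L2 with hδdef
  have hδ2 : 2 < δ := by linarith
  have hδ1 : 0 < δ - 1 := by linarith
  -- unit sums
  have hv2 : ∑ t, v t ^ 2 = 1 := by
    have h := hv_unit
    rw [vecNorm] at h
    have h2 := Real.sq_sqrt (show 0 ≤ ∑ t, v t ^ 2 by positivity)
    rw [h] at h2
    linarith [h2]
  have hv'2 : ∑ t, v' t ^ 2 = 1 := by
    have h := hv'_unit
    rw [vecNorm] at h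
    have h2 := Real.sq_sqrt (show 0 ≤ ∑ t, v' t ^ 2 by positivity)
    rw [h] at h2
    linarith [h2]
  -- edge structure
  obtain ⟨i, j, ε, hij, hε2, hE0⟩ := edge_structure G G' hdiff
  have hE : ∀ x : Fin (n + 2) → ℝ, A'.mulVec x = A.mulVec x + Efun i j ε x := by
    intro x
    rw [hE0 x]
    rfl
  -- coordinates
  set a : Fin (n + 2) → ℝ := fun k => ⟪u k, toE v⟫ with hadef
  set b : Fin (n + 2) → ℝ := fun k => ⟪u k, toE v'⟫ with hbdef
  set g : Fin (n + 2) → ℝ := fun k => ⟪u k, toE (Efun i j ε v)⟫ with hgdef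
  have hsuma : ∑ k, a k ^ 2 = 1 := by
    rw [hadef]
    simp only []
    rw [sq_sum_eq u (toE v), inner_toE_self, hv2]
  have hsumb : ∑ k, b k ^ 2 = 1 := by
    rw [hbdef]
    simp only []
    rw [sq_sum_eq u (toE v'), inner_toE_self, hv'2]
  have hsumg : ∑ k, g k ^ 2 = v i ^ 2 + v j ^ 2 := by
    rw [hgdef]
    simp only []
    rw [sq_sum_eq u (toE (Efun i j ε v)), inner_toE_self, Efun_sq_sum hij hε2 v]
  -- eigen relations
  have heig : ∀ k, ν k * a k = l * a k + g k := by
    intro k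
    have h1 : ⟪(u k : EuclideanSpace ℝ (Fin (n + 2))), toE (A'.mulVec v)⟫ = ν k * a k :=
      eig_inner' hA' k v
    have h2 : A'.mulVec v = l • v + Efun i j ε v := by rw [hE v, hv_eig]
    rw [h2, toE_add, toE_smul, inner_add_right, real_inner_smul_right] at h1
    rw [← h1]
  have hbeig : ∀ k, ν k * b k = l' * b k := by
    intro k
    have h1 : ⟪(u k : EuclideanSpace ℝ (Fin (n + 2))), toE (A'.mulVec v')⟫ = ν k * b k :=
      eig_inner' hA' k v'
    rw [hv'_eig, toE_smul, real_inner_smul_right] at h1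
    rw [← h1]
  -- Rayleigh : lam1 ν ≥ L1 - 1
  have hvAv : ∑ t, v t * (A'.mulVec v) t = ∑ k, ν k * a k ^ 2 := by
    calc ∑ t, v t * (A'.mulVec v) t = ⟪toE v, toE (A'.mulVec v)⟫ :=
          (inner_toE₂ v (A'.mulVec v)).symm
      _ = ∑ k, ⟪(u k : EuclideanSpace ℝ (Fin (n + 2))), toE v⟫
            * ⟪(u k : EuclideanSpace ℝ (Fin (n + 2))), toE (A'.mulVec v)⟫ :=
          (parseval u (toE v) (toE (A'.mulVec v))).symm
      _ = ∑ k, ν k * a k ^ 2 := by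
          apply Finset.sum_congr rfl
          intro k _
          rw [eig_inner' hA' k v]
          rw [hadef]
          ring
  have hray : L1 - 1 ≤ lam1 ν := by
    have h2 : |∑ k, ν k * a k ^ 2| ≤ lam1 ν := by
      calc |∑ k, ν k * a k ^ 2| ≤ ∑ k, |ν k * a k ^ 2| := Finset.abs_sum_le_sum_abs _ _
        _ ≤ ∑ k, lam1 ν * a k ^ 2 := by
            apply Finset.sum_le_sum
            intro k _
            rw [abs_mul, abs_of_nonneg (sq_nonneg (a k))]
            exact mul_le_mul_of_nonneg_right (le_lam1 ν k) (sq_nonneg _)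
        _ = lam1 ν := by rw [← Finset.mul_sum, hsuma, mul_one]
    have h3 : ∑ t, v t * (A'.mulVec v) t = l + ∑ t, v t * Efun i j ε v t := by
      rw [hE v]
      have : ∀ t, v t * (A.mulVec v + Efun i j ε v) t
          = l * v t ^ 2 + v t * Efun i j ε v t := by
        intro t
        rw [Pi.add_apply, hv_eig, Pi.smul_apply, smul_eq_mul]
        ring
      rw [Finset.sum_congr rfl fun t _ => this t, Finset.sum_add_distrib, ← Finset.mul_sum,
        hv2, mul_one]
    have h4 : |∑ t, v t * Efun i j ε v t| ≤ 1 := by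
      have hsum2 : ∑ t, v t * Efun i j ε v t = ε * (2 * (v i * v j)) := by
        rw [sum_two (fun t => v t * Efun i j ε v t) hij]
        · have e1 : Efun i j ε v i = ε * v j := by simp [Efun]
          have e2 : Efun i j ε v j = ε * v i := by simp [Efun, hij.symm]
          rw [e1, e2]; ring
        · intro t ht1 ht2; simp [Efun, ht1, ht2]
      rw [hsum2, abs_mul, abs_eq_one_of_sq hε2, one_mul]
      have h5 : |2 * (v i * v j)| ≤ v i ^ 2 + v j ^ 2 := by
        rw [abs_mul, abs_mul, abs_two]
        nlinarith [sq_nonneg (|v i| - |v j|), sq_abs (v i), sq_abs (v j), abs_nonneg (v i),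
          abs_nonneg (v j)]
      have h6 : v i ^ 2 + v j ^ 2 ≤ 1 := by
        rw [← hv2]; exact pair_le_sum v hij
      linarith
    rw [h3] at hvAv
    have h7 : |l| - |∑ t, v t * Efun i j ε v t| ≤ |l + ∑ t, v t * Efun i j ε v t| := by
      have := abs_add_le (l + ∑ t, v t * Efun i j ε v t) (-(∑ t, v t * Efun i j ε v t))
      simp only [add_neg_cancel_right, abs_neg] at this
      linarith
    rw [hl] at h7
    rw [← hvAv] at h2
    linarith
  -- the index k0
  obtain ⟨k0, hk0⟩ : ∃ k, b k ≠ 0 := by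
    by_contra h
    push_neg at h
    rw [Finset.sum_congr rfl (fun k _ => by rw [h k]; norm_num : ∀ k ∈ Finset.univ, b k ^ 2 = 0)]
      at hsumb
    simp at hsumb
  have hνk0 : ν k0 = l' := by
    have h := hbeig k0
    have : (ν k0 - l') * b k0 = 0 := by linarith
    rcases mul_eq_zero.mp this with h1 | h1
    · linarith
    · exact absurd h1 hk0
  have hbig0 : L2 + 1 < |ν k0| := by
    rw [hνk0, hl']
    have : lam1 hA'.eigenvalues = lam1 ν := rfl
    rw [this]
    linarith
  have hsmall' : ∀ k, k ≠ k0 → |ν k| ≤ L2 + 1 := by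
    intro k hne
    by_contra hcon
    push_neg at hcon
    exact at_most_one_big hA hA' hij hε2 hE hne hcon hbig0
  have hbz : ∀ k, k ≠ k0 → b k = 0 := by
    intro k hne
    by_contra hbk
    have h := hbeig k
    have h2 : (ν k - l') * b k = 0 := by linarith
    rcases mul_eq_zero.mp h2 with h1 | h1
    · have : ν k = l' := by linarith
      have h3 : L2 + 1 < |ν k| := by rw [this, hl']; linarith [hray]
      exact absurd (hsmall' k hne) (not_le.mpr h3)
    · exact absurd h1 hbk
  have hbk0 : b k0 ^ 2 = 1 := by
    have hsplit : ∑ k, b k ^ 2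
        = ∑ k ∈ Finset.univ.erase k0, b k ^ 2 + b k0 ^ 2 :=
      (Finset.sum_erase_add _ _ (Finset.mem_univ k0)).symm
    have hz : ∑ k ∈ Finset.univ.erase k0, b k ^ 2 = 0 := by
      apply Finset.sum_eq_zero
      intro k hk
      rw [hbz k (Finset.ne_of_mem_erase hk)]
      norm_num
    rw [hsplit, hz] at hsumb
    linarith
  set c := ∑ t, v t * v' t with hcdef
  have hc : c = a k0 * b k0 := by
    calc c = ⟪toE v, toE v'⟫ := (inner_toE₂ v v').symm
      _ = ∑ k, ⟪(u k : EuclideanSpace ℝ (Fin (n + 2))), toE v⟫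
            * ⟪(u k : EuclideanSpace ℝ (Fin (n + 2))), toE v'⟫ :=
          (parseval u (toE v) (toE v')).symm
      _ = a k0 * b k0 := by
          have hsplit : ∑ k, a k * b k
              = ∑ k ∈ Finset.univ.erase k0, a k * b k + a k0 * b k0 :=
            (Finset.sum_erase_add _ _ (Finset.mem_univ k0)).symm
          have hz : ∑ k ∈ Finset.univ.erase k0, a k * b k = 0 := by
            apply Finset.sum_eq_zero
            intro k hk
            rw [hbz k (Finset.ne_of_mem_erase hk), mul_zero]
          rw [hsplit, hz, zero_add]
  have hc2 : c ^ 2 = a k0 ^ 2 := by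
    rw [hc, mul_pow, hbk0, mul_one]
  have hcnn : 0 ≤ c := halign
  have hc1 : c ≤ 1 := by
    have h : a k0 ^ 2 ≤ 1 := by
      rw [← hsuma]
      exact Finset.single_le_sum (fun k _ => sq_nonneg (a k)) (Finset.mem_univ k0)
    nlinarith
  -- main estimate
  have hkey : (δ - 1) ^ 2 * (1 - c ^ 2) ≤ v i ^ 2 + v j ^ 2 := by
    have h5 : ∑ k ∈ Finset.univ.erase k0, a k ^ 2 = 1 - c ^ 2 := by
      have hsplit : ∑ k, a k ^ 2
          = ∑ k ∈ Finset.univ.erase k0, a k ^ 2 + a k0 ^ 2 :=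
        (Finset.sum_erase_add _ _ (Finset.mem_univ k0)).symm
      rw [hsuma] at hsplit
      rw [← hc2] at hsplit
      linarith
    have h6 : ∀ k ∈ Finset.univ.erase k0, (δ - 1) ^ 2 * a k ^ 2 ≤ g k ^ 2 := by
      intro k hk
      have hsm := hsmall' k (Finset.ne_of_mem_erase hk)
      have hgk : g k = (ν k - l) * a k := by
        have h := heig k
        linear_combination -h
      have habs : δ - 1 ≤ |ν k - l| := by
        have h7 : |l| - |ν k| ≤ |l - ν k| := abs_sub_abs_le_abs_sub l (ν k)
        rw [abs_sub_comm] at h7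
        rw [hl] at h7
        linarith
      have h8 : (δ - 1) ^ 2 ≤ (ν k - l) ^ 2 := by
        rw [← sq_abs (ν k - l)]
        exact pow_le_pow_left₀ hδ1.le habs 2
      calc (δ - 1) ^ 2 * a k ^ 2 ≤ (ν k - l) ^ 2 * a k ^ 2 :=
            mul_le_mul_of_nonneg_right h8 (sq_nonneg _)
        _ = g k ^ 2 := by rw [hgk]; ring
    calc (δ - 1) ^ 2 * (1 - c ^ 2)
        = ∑ k ∈ Finset.univ.erase k0, (δ - 1) ^ 2 * a k ^ 2 := by rw [← Finset.mul_sum, h5]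
      _ ≤ ∑ k ∈ Finset.univ.erase k0, g k ^ 2 := Finset.sum_le_sum h6
      _ ≤ ∑ k, g k ^ 2 := by
          apply Finset.sum_le_sum_of_subset_of_nonneg (Finset.erase_subset _ _)
          intros; positivity
      _ = v i ^ 2 + v j ^ 2 := hsumg
  -- conclusion
  have hSdiff : ∑ t, (v - v') t ^ 2 = 2 - 2 * c := by
    have hterm : ∀ t : Fin (n + 2), (v - v') t ^ 2 = v t ^ 2 + v' t ^ 2 - 2 * (v t * v' t) := by
      intro t; rw [Pi.sub_apply]; ring
    rw [Finset.sum_congr rfl fun t _ => hterm t, Finset.sum_sub_distrib,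
      Finset.sum_add_distrib, ← Finset.mul_sum, hv2, hv'2, ← hcdef]
    ring
  have hW : v i ^ 2 + v j ^ 2 ≤ v (π 0) ^ 2 + v (π 1) ^ 2 := pair_le_top v π hπ hij
  set W := v (π 0) ^ 2 + v (π 1) ^ 2 with hWdef
  have hWnn : 0 ≤ W := by positivity
  have hδpos : (0:ℝ) < δ := by linarith
  have hfin : eigGap hA.eigenvalues = δ := rfl
  clear_value W c δ L1 L2
  have hgoal2 : ∑ t, (v - v') t ^ 2 ≤ (2 * Real.sqrt W / δ) ^ 2 :=
    final_arith hSdiff hcnn hc1 hkey hW hWnn hgap'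
  rw [hfin, vecNorm]
  calc Real.sqrt (∑ t, (v - v') t ^ 2) ≤ Real.sqrt ((2 * Real.sqrt W / δ) ^ 2) :=
        Real.sqrt_le_sqrt hgoal2
    _ = 2 * Real.sqrt W / δ :=
        Real.sqrt_sq (div_nonneg (by positivity) hδpos.le)
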